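/- For every δ > 0 there exists N such that for every perfect square n ≥ N and every subset B' ⊆ B with |B'| ≥ δ|B|, the number of vectors u ∈ F_2^n satisfying Σ_{w∈B'} χ(u·w) ≥ 0.98·|B'| is at most exp(n^{2/3}), where for each w the term χ(u·w) equals 1 if the F_2 dot product u·w = Σ_k u(k)w(k) is 0 and equals −1 otherwise. -/

import Mathlib

open Finset

/-- `B = {v ∈ F_2^n : |v| = √n}` (for `n = s²`). -/
def sphereB (n s : ℕ) : Finset (Fin n → ZMod 2) :=
  Finset.univ.filter (fun v => hammingNorm v = s)

/-- The dot product in `F_2^n`. -/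
def dotF2 (n : ℕ) (u w : Fin n → ZMod 2) : ZMod 2 := ∑ k, u k * w k

/-- `χ(u·w) = 1` if `u·w = 0` and `-1` otherwise. -/
noncomputable def chi (n : ℕ) (u w : Fin n → ZMod 2) : ℝ :=
  if dotF2 n u w = 0 then 1 else -1

/-!
Moment method. Write `f(u) = ∑_{w ∈ B'} χ(u·w)`. For even `M`, `∑_u f(u)^M` is `2^n` times the
number of `M`-tuples from `B'` summing to zero, so it only grows when `B'` is enlarged to `B`, where
`f(u) = K_s(|u|)` is a Krawtchouk polynomial. The three-term recurrence of the Krawtchouk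
polynomials gives `|K_s(t)| ≤ C(n,s) (1 - d/n)^⌈s/2⌉` for `d = min(t, n - t) ≥ 2s`; with
`M = 2s⌈log n⌉` this yields `K_s(t)^M C(n,t) ≤ C(n,s)^M n^{2s}` for every `t`, hence
`∑_u f(u)^M ≤ C(n,s)^M n^{2s} (n + 1)`. Since `|B'| ≥ δ C(n,s)`, Markov's inequality bounds the
number of `u` with `f(u) ≥ 0.98 |B'|` by `(0.98 δ)^{-M} n^{2s} (n + 1) = exp(O(√n log n))`.
-/

open Matrix Function Filter Real

lemma zmod2_eq_zero_or_eq_one (x : ZMod 2) : x = 0 ∨ x = 1 := by revert x; decide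

lemma zmod2_eq_one_of_ne_zero {x : ZMod 2} (h : x ≠ 0) : x = 1 :=
  (zmod2_eq_zero_or_eq_one x).resolve_left h

def signF2 (x : ZMod 2) : ℝ := if x = 0 then 1 else -1

lemma chi_eq_signF2 (n : ℕ) (u w : Fin n → ZMod 2) : chi n u w = signF2 (u ⬝ᵥ w) := rfl

@[simp] lemma signF2_zero : signF2 0 = 1 := if_pos rfl

@[simp] lemma signF2_one : signF2 1 = -1 := if_neg one_ne_zero

lemma abs_signF2 (x : ZMod 2) : |signF2 x| = 1 := by
  unfold signF2; split_ifs <;> simp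

lemma signF2_add (x y : ZMod 2) : signF2 (x + y) = signF2 x * signF2 y := by
  have h : (1 + 1 : ZMod 2) = 0 := by decide
  rcases zmod2_eq_zero_or_eq_one x with rfl | rfl <;>
    rcases zmod2_eq_zero_or_eq_one y with rfl | rfl <;> simp [signF2, h]

lemma signF2_sum {α : Type*} (s : Finset α) (f : α → ZMod 2) :
    signF2 (∑ a ∈ s, f a) = ∏ a ∈ s, signF2 (f a) := by
  induction s using Finset.cons_induction with
  | empty => simp
  | cons a s ha ih => rw [sum_cons, prod_cons, signF2_add, ih]

section Moments

variable {ι : Type*} [Fintype ι] [DecidableEq ι]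

lemma sum_signF2_dotProduct (v : ι → ZMod 2) :
    ∑ u : ι → ZMod 2, signF2 (u ⬝ᵥ v) = if v = 0 then 2 ^ Fintype.card ι else 0 := by
  have hsingle (a : ZMod 2) : ∑ x : ZMod 2, signF2 (x * a) = if a = 0 then 2 else 0 := by
    rw [show (univ : Finset (ZMod 2)) = {0, 1} from rfl]
    rcases zmod2_eq_zero_or_eq_one a with rfl | rfl <;> norm_num
  simp_rw [dotProduct, signF2_sum]
  rw [← Fintype.piFinset_univ, ← prod_univ_sum (fun _ => univ) (fun i x => signF2 (x * v i))]
  simp_rw [hsingle]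
  split_ifs with hv
  · simp [hv]
  · obtain ⟨i, hi⟩ := Function.ne_iff.1 hv
    exact prod_eq_zero (mem_univ i) (if_neg hi)

lemma sum_pow_sum_signF2_dotProduct (X : Finset (ι → ZMod 2)) (N : ℕ) :
    ∑ u : ι → ZMod 2, (∑ w ∈ X, signF2 (u ⬝ᵥ w)) ^ N =
      2 ^ Fintype.card ι * #{p ∈ Fintype.piFinset fun _ : Fin N => X | ∑ i, p i = 0} := by
  have hexpand (u : ι → ZMod 2) : (∑ w ∈ X, signF2 (u ⬝ᵥ w)) ^ N =
      ∑ p ∈ Fintype.piFinset fun _ : Fin N => X, signF2 (u ⬝ᵥ ∑ i, p i) := by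
    rw [← Fin.prod_const, prod_univ_sum]
    simp_rw [dotProduct_sum, signF2_sum]
  simp_rw [hexpand]
  rw [sum_comm]
  simp_rw [sum_signF2_dotProduct]
  rw [sum_ite, sum_const_zero, add_zero, sum_const, nsmul_eq_mul, mul_comm]

lemma sum_pow_sum_signF2_dotProduct_mono {X Y : Finset (ι → ZMod 2)} (hXY : X ⊆ Y) (N : ℕ) :
    ∑ u : ι → ZMod 2, (∑ w ∈ X, signF2 (u ⬝ᵥ w)) ^ N ≤
      ∑ u : ι → ZMod 2, (∑ w ∈ Y, signF2 (u ⬝ᵥ w)) ^ N := by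
  simp_rw [sum_pow_sum_signF2_dotProduct]
  gcongr
  exact Fintype.piFinset_subset _ _ fun _ => hXY

end Moments

section Krawtchouk

variable {n : ℕ}

def suppF2 (w : Fin n → ZMod 2) : Finset (Fin n) := {i | w i ≠ 0}

@[simp] lemma mem_suppF2 {w : Fin n → ZMod 2} {i : Fin n} : i ∈ suppF2 w ↔ w i ≠ 0 := by
  simp [suppF2]

lemma hammingNorm_le (w : Fin n → ZMod 2) : hammingNorm w ≤ n :=
  hammingNorm_le_card_fintype.trans_eq (Fintype.card_fin n)

lemma mem_sphereB {j : ℕ} {w : Fin n → ZMod 2} : w ∈ sphereB n j ↔ #(suppF2 w) = j := by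
  simp [sphereB, hammingNorm, suppF2]

lemma sphereB_zero : sphereB n 0 = {0} := by
  ext w; simp [sphereB]

lemma card_sphereB (j : ℕ) : #(sphereB n j) = n.choose j := by
  have hsupp (S : Finset (Fin n)) : suppF2 (fun i => if i ∈ S then 1 else 0) = S := by
    ext i; by_cases hi : i ∈ S <;> simp [hi]
  rw [show n.choose j = #(powersetCard j (univ : Finset (Fin n))) by simp]
  refine card_nbij' suppF2 (fun S i => if i ∈ S then 1 else 0) ?_ ?_ ?_ ?_
  · intro w hw
    simpa [mem_sphereB] using hw
  · intro S hS
    simpa [mem_sphereB, hsupp] using hS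
  · intro w _
    ext i
    rcases zmod2_eq_zero_or_eq_one (w i) with h | h <;> simp [h]
  · intro S _
    exact hsupp S

lemma suppF2_update_zero (w : Fin n → ZMod 2) (i : Fin n) :
    suppF2 (update w i 0) = (suppF2 w).erase i := by
  ext k; by_cases hk : k = i <;> simp [hk]

lemma suppF2_update_one (w : Fin n → ZMod 2) (i : Fin n) :
    suppF2 (update w i 1) = insert i (suppF2 w) := by
  ext k; by_cases hk : k = i <;> simp [hk]

lemma sum_sphereB_succ_sum_suppF2 (j : ℕ) (F : (Fin n → ZMod 2) → Fin n → ℝ) :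
    ∑ w ∈ sphereB n (j + 1), ∑ i ∈ suppF2 w, F w i =
      ∑ v ∈ sphereB n j, ∑ i ∈ (suppF2 v)ᶜ, F (update v i 1) i := by
  rw [sum_sigma', sum_sigma']
  refine sum_bij' (fun x _ => ⟨update x.1 x.2 0, x.2⟩) (fun x _ => ⟨update x.1 x.2 1, x.2⟩)
    ?_ ?_ ?_ ?_ ?_
  · rintro ⟨w, i⟩ h
    simp only [mem_sigma, mem_sphereB, mem_suppF2] at h
    simp [mem_sphereB, suppF2_update_zero, card_erase_of_mem, h]
  · rintro ⟨v, i⟩ h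
    simp only [mem_sigma, mem_sphereB, mem_compl, mem_suppF2, not_not] at h
    simp [mem_sphereB, suppF2_update_one, card_insert_of_notMem, h]
  · rintro ⟨w, i⟩ h
    simp only [mem_sigma, mem_suppF2] at h
    simp [← zmod2_eq_one_of_ne_zero h.2]
  · rintro ⟨v, i⟩ h
    simp only [mem_sigma, mem_compl, mem_suppF2, not_not] at h
    simp [← h.2]
  · rintro ⟨w, i⟩ h
    simp only [mem_sigma, mem_suppF2] at h
    simp [← zmod2_eq_one_of_ne_zero h.2]

lemma signF2_dotProduct_update_of_ne (u w : Fin n → ZMod 2) {i : Fin n} {c : ZMod 2}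
    (h : c ≠ w i) : signF2 (u ⬝ᵥ update w i c) = signF2 (u ⬝ᵥ w) * signF2 (u i) := by
  have hflip : ∀ a b : ZMod 2, a ≠ b → a = b + 1 := by decide
  have hw : update w i c = w + Pi.single i 1 := by
    ext k
    by_cases hk : k = i
    · subst hk; simpa using hflip c (w k) h
    · simp [hk]
  rw [hw, dotProduct_add, dotProduct_single, mul_one, signF2_add]

lemma sum_signF2_apply (u : Fin n → ZMod 2) :
    ∑ i, signF2 (u i) = n - 2 * hammingNorm u := by
  have h (x : ZMod 2) : signF2 x = 1 - 2 * if x ≠ 0 then 1 else 0 := by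
    unfold signF2; split_ifs <;> simp_all; norm_num
  simp only [h, sum_sub_distrib, ← mul_sum, sum_boole, sum_const, card_univ, Fintype.card_fin]
  simp [hammingNorm]

noncomputable def krawtchouk (u : Fin n → ZMod 2) (j : ℕ) : ℝ :=
  ∑ w ∈ sphereB n j, signF2 (u ⬝ᵥ w)

lemma succ_mul_krawtchouk_succ (u : Fin n → ZMod 2) (j : ℕ) :
    (j + 1) * krawtchouk u (j + 1) = (n - 2 * hammingNorm u) * krawtchouk u j -
      ∑ v ∈ sphereB n j, signF2 (u ⬝ᵥ v) * ∑ i ∈ suppF2 v, signF2 (u i) := by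
  have hlhs : (j + 1) * krawtchouk u (j + 1) =
      ∑ w ∈ sphereB n (j + 1), ∑ _i ∈ suppF2 w, signF2 (u ⬝ᵥ w) := by
    rw [krawtchouk, mul_sum]
    refine sum_congr rfl fun w hw => ?_
    rw [sum_const, mem_sphereB.1 hw, nsmul_eq_mul]
    push_cast; ring
  rw [hlhs, sum_sphereB_succ_sum_suppF2, krawtchouk, mul_sum, ← sum_sub_distrib]
  refine sum_congr rfl fun v _ => ?_
  have hcompl := sum_compl_add_sum (suppF2 v) fun i => signF2 (u i)
  rw [sum_signF2_apply] at hcompl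
  have hupdate : ∀ i ∈ (suppF2 v)ᶜ,
      signF2 (u ⬝ᵥ update v i 1) = signF2 (u ⬝ᵥ v) * signF2 (u i) := fun i hi =>
    signF2_dotProduct_update_of_ne u v (by simp_all)
  rw [← hcompl, sum_congr rfl hupdate, ← mul_sum]
  ring

lemma sum_sphereB_succ_signF2_mul_sum_suppF2 (u : Fin n → ZMod 2) (j : ℕ) :
    ∑ w ∈ sphereB n (j + 1), signF2 (u ⬝ᵥ w) * ∑ i ∈ suppF2 w, signF2 (u i) =
      (n - j) * krawtchouk u j := by
  have hlhs : ∀ w ∈ sphereB n (j + 1), signF2 (u ⬝ᵥ w) * ∑ i ∈ suppF2 w, signF2 (u i) =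
      ∑ i ∈ suppF2 w, signF2 (u ⬝ᵥ update w i 0) := fun w _ => by
    rw [mul_sum]
    exact sum_congr rfl fun i hi =>
      (signF2_dotProduct_update_of_ne u w (Ne.symm (mem_suppF2.1 hi))).symm
  rw [sum_congr rfl hlhs, sum_sphereB_succ_sum_suppF2, krawtchouk, mul_sum]
  refine sum_congr rfl fun v hv => ?_
  have hrestore : ∀ i ∈ (suppF2 v)ᶜ, update (update v i 1) i 0 = v := fun i hi => by
    simp only [mem_compl, mem_suppF2, not_not] at hi
    rw [update_idem, ← hi, update_eq_self]
  have hj : j ≤ n := mem_sphereB.1 hv ▸ hammingNorm_le v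
  rw [sum_congr rfl fun i hi => by rw [hrestore i hi]]
  simp [card_compl, mem_sphereB.1 hv, Nat.cast_sub hj]

lemma krawtchouk_zero (u : Fin n → ZMod 2) : krawtchouk u 0 = 1 := by
  simp [krawtchouk, sphereB_zero]

lemma krawtchouk_one (u : Fin n → ZMod 2) : krawtchouk u 1 = n - 2 * hammingNorm u := by
  simpa [krawtchouk_zero, sphereB_zero, suppF2] using succ_mul_krawtchouk_succ u 0

lemma krawtchouk_add_two (u : Fin n → ZMod 2) (j : ℕ) :
    (j + 2) * krawtchouk u (j + 2) =
      (n - 2 * hammingNorm u) * krawtchouk u (j + 1) - (n - j) * krawtchouk u j := by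
  have h := succ_mul_krawtchouk_succ u (j + 1)
  rw [sum_sphereB_succ_signF2_mul_sum_suppF2] at h
  push_cast at h
  linarith

lemma abs_krawtchouk_le (u : Fin n → ZMod 2) (j : ℕ) : |krawtchouk u j| ≤ n.choose j := by
  calc |krawtchouk u j| ≤ ∑ w ∈ sphereB n j, |signF2 (u ⬝ᵥ w)| := abs_sum_le_sum_abs _ _
    _ = n.choose j := by simp [abs_signF2, card_sphereB]

end Krawtchouk

lemma Nat.cast_sub_mul_choose (n k : ℕ) :
    ((n : ℝ) - k) * n.choose k = (k + 1) * n.choose (k + 1) := by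
  rcases le_or_gt k n with hk | hk
  · have h := Nat.choose_succ_right_eq n k
    rw [← Nat.cast_sub hk]
    exact_mod_cast by rw [mul_comm, ← h, mul_comm]
  · simp [Nat.choose_eq_zero_of_lt hk, Nat.choose_eq_zero_of_lt (Nat.lt_succ_of_lt hk)]

lemma abs_le_choose_mul_pow_of_recurrence {a : ℕ → ℝ} {n s : ℕ} {x ρ : ℝ}
    (h0 : a 0 = 1) (h1 : a 1 = x)
    (hrec : ∀ j : ℕ, (j + 2) * a (j + 2) = x * a (j + 1) - (n - j) * a j)
    (hρ0 : 0 ≤ ρ) (hρ1 : ρ ≤ 1) (hx : |x| + s ≤ ρ * (n - s)) :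
    ∀ j ≤ s, |a j| ≤ n.choose j * ρ ^ ((j + 1) / 2) := by
  intro j
  induction j using Nat.twoStepInduction with
  | zero => simp [h0]
  | one =>
    intro _
    have : ρ * s ≥ 0 := by positivity
    simp only [h1, Nat.choose_one_right]
    linarith
  | more j ih0 ih1 =>
    intro hj
    have hjs : (j : ℝ) + 2 ≤ s := by exact_mod_cast hj
    have hsn : (s : ℝ) ≤ n := by nlinarith [abs_nonneg x]
    have hA1 : |a (j + 1)| ≤ n.choose (j + 1) * ρ ^ ((j + 1) / 2) :=
      (ih1 (by omega)).trans (by gcongr ?_ * ?_; exact pow_le_pow_of_le_one hρ0 hρ1 (by omega))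
    have hA0 := ih0 (by omega)
    have hxs : |x| + (j + 1) ≤ ρ * (n - (j + 1)) := by nlinarith
    have hpow : ρ ^ ((j + 2 + 1) / 2) = ρ * ρ ^ ((j + 1) / 2) := by
      rw [show (j + 2 + 1) / 2 = (j + 1) / 2 + 1 by omega, pow_succ']
    have hchoose := Nat.cast_sub_mul_choose n (j + 1)
    push_cast at hchoose
    have key : (j + 2) * |a (j + 2)| ≤ (j + 2) * (n.choose (j + 2) * ρ ^ ((j + 2 + 1) / 2)) :=
      calc (j + 2) * |a (j + 2)| = |x * a (j + 1) - (n - j) * a j| := by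
            rw [← hrec, abs_mul, abs_of_pos (by positivity : (0 : ℝ) < j + 2)]
        _ ≤ |x| * |a (j + 1)| + (n - j) * |a j| := by
            refine (abs_sub _ _).trans_eq ?_
            rw [abs_mul, abs_mul, abs_of_nonneg (by linarith : (0 : ℝ) ≤ n - j)]
        _ ≤ |x| * (n.choose (j + 1) * ρ ^ ((j + 1) / 2)) +
              (n - j) * (n.choose j * ρ ^ ((j + 1) / 2)) := by
            gcongr
            linarith
        _ = (|x| + (j + 1)) * n.choose (j + 1) * ρ ^ ((j + 1) / 2) := by
            rw [← mul_assoc (n - j : ℝ), Nat.cast_sub_mul_choose]; ring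
        _ ≤ ρ * (n - (j + 1)) * n.choose (j + 1) * ρ ^ ((j + 1) / 2) := by gcongr
        _ = (j + 2) * (n.choose (j + 2) * ρ ^ ((j + 2 + 1) / 2)) := by
            rw [hpow]; linear_combination ρ * ρ ^ ((j + 1) / 2) * hchoose
    exact le_of_mul_le_mul_left key (by positivity)

section KrawtchoukBounds

variable {n : ℕ}

lemma abs_krawtchouk_le_of_two_mul_le (u : Fin n → ZMod 2) {s d : ℕ} (hsd : 2 * s ≤ d)
    (hdu : d ≤ hammingNorm u) (hdu' : d + hammingNorm u ≤ n) :
    |krawtchouk u s| ≤ n.choose s * (1 - d / n) ^ ((s + 1) / 2) := by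
  have hdn : (d : ℝ) ≤ n := by exact_mod_cast (by omega : d ≤ n)
  have hdiv : (d / n : ℝ) * n ≤ d := by
    rcases (Nat.cast_nonneg n : (0 : ℝ) ≤ n).eq_or_lt with h | h
    · simp [← h]
    · rw [div_mul_cancel₀ _ h.ne']
  have hx : |(n : ℝ) - 2 * hammingNorm u| ≤ n - 2 * d := by
    rw [abs_le]; constructor <;> push_cast [← Nat.cast_le (α := ℝ)] at hdu hdu' ⊢ <;> linarith
  refine abs_le_choose_mul_pow_of_recurrence (krawtchouk_zero u) (krawtchouk_one u)
    (krawtchouk_add_two u) (sub_nonneg.2 (div_le_one_of_le₀ hdn (by positivity)))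
    (by simp; positivity) ?_ s le_rfl
  have hsd' : (2 * s : ℝ) ≤ d := by exact_mod_cast hsd
  nlinarith [div_nonneg (Nat.cast_nonneg d) (Nat.cast_nonneg n : (0 : ℝ) ≤ n),
    (Nat.cast_nonneg s : (0 : ℝ) ≤ s)]

lemma krawtchouk_pow_le_of_two_mul_le (u : Fin n → ZMod 2) {s d L : ℕ} (hn0 : 0 < n)
    (hn : n ≤ s ^ 2) (hL : log n ≤ L) (hsd : 2 * s ≤ d) (hdu : d ≤ hammingNorm u)
    (hdu' : d + hammingNorm u ≤ n) :
    krawtchouk u s ^ (2 * s * L) ≤ n.choose s ^ (2 * s * L) * ((n : ℝ)⁻¹) ^ d := by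
  have hnR : (0 : ℝ) < n := by exact_mod_cast hn0
  have hdn : (d : ℝ) ≤ n := by exact_mod_cast (by omega : d ≤ n)
  set ρ : ℝ := 1 - d / n
  have hρ0 : 0 ≤ ρ := sub_nonneg.2 (div_le_one_of_le₀ hdn hnR.le)
  have hρ1 : ρ ≤ 1 := by simp only [ρ]; linarith [div_nonneg (Nat.cast_nonneg d) hnR.le]
  have hexp : n * L ≤ (s + 1) / 2 * (2 * s * L) :=
    calc n * L ≤ s * s * L := by gcongr; nlinarith
      _ ≤ (s + 1) / 2 * 2 * s * L := by gcongr; omega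
      _ = (s + 1) / 2 * (2 * s * L) := by ring
  have hρpow : ρ ^ (n * L) ≤ ((n : ℝ)⁻¹) ^ d :=
    calc ρ ^ (n * L) = (ρ ^ n) ^ L := pow_mul _ _ _
      _ ≤ exp (-d) ^ L := by gcongr; exact one_sub_div_pow_le_exp_neg hdn
      _ = exp (-L) ^ d := by rw [← exp_nat_mul, ← exp_nat_mul]; ring_nf
      _ ≤ ((n : ℝ)⁻¹) ^ d := by
        gcongr
        rw [exp_neg]
        exact inv_anti₀ hnR ((log_le_iff_le_exp hnR).1 hL)
  calc krawtchouk u s ^ (2 * s * L) = |krawtchouk u s| ^ (2 * s * L) :=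
        (Even.pow_abs ⟨s * L, by ring⟩ _).symm
    _ ≤ (n.choose s * ρ ^ ((s + 1) / 2)) ^ (2 * s * L) := by
        gcongr; exact abs_krawtchouk_le_of_two_mul_le u hsd hdu hdu'
    _ = n.choose s ^ (2 * s * L) * ρ ^ ((s + 1) / 2 * (2 * s * L)) := by
        rw [mul_pow, ← pow_mul]
    _ ≤ n.choose s ^ (2 * s * L) * ρ ^ (n * L) := by
        gcongr ?_ * ?_; exact pow_le_pow_of_le_one hρ0 hρ1 hexp
    _ ≤ n.choose s ^ (2 * s * L) * ((n : ℝ)⁻¹) ^ d := by gcongr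

lemma krawtchouk_pow_mul_choose_le (u : Fin n → ZMod 2) {s L : ℕ} (hn0 : 0 < n)
    (hn : n ≤ s ^ 2) (hL : log n ≤ L) :
    krawtchouk u s ^ (2 * s * L) * n.choose (hammingNorm u) ≤
      n.choose s ^ (2 * s * L) * (n : ℝ) ^ (2 * s) := by
  set t := hammingNorm u
  have htn : t ≤ n := hammingNorm_le u
  have hn1 : (1 : ℝ) ≤ n := by exact_mod_cast hn0
  have hchoose : (n.choose t : ℝ) ≤ (n : ℝ) ^ min t (n - t) := by
    rcases le_total t (n - t) with h | h
    · rw [min_eq_left h]; exact_mod_cast Nat.choose_le_pow n t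
    · rw [min_eq_right h, ← Nat.choose_symm htn]; exact_mod_cast Nat.choose_le_pow n (n - t)
  set d := min t (n - t)
  by_cases hsd : 2 * s ≤ d
  · calc krawtchouk u s ^ (2 * s * L) * n.choose t
        ≤ n.choose s ^ (2 * s * L) * ((n : ℝ)⁻¹) ^ d * (n : ℝ) ^ d :=
          mul_le_mul (krawtchouk_pow_le_of_two_mul_le u hn0 hn hL hsd (min_le_left _ _)
            (by omega)) hchoose (by positivity) (by positivity)
      _ = n.choose s ^ (2 * s * L) := by
          rw [mul_assoc, ← mul_pow, inv_mul_cancel₀ (by positivity), one_pow, mul_one]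
      _ ≤ n.choose s ^ (2 * s * L) * (n : ℝ) ^ (2 * s) :=
          le_mul_of_one_le_right (by positivity) (one_le_pow₀ hn1)
  · have hK : krawtchouk u s ^ (2 * s * L) ≤ n.choose s ^ (2 * s * L) := by
      have hM : Even (2 * s * L) := ⟨s * L, by ring⟩
      rw [← hM.pow_abs]
      exact pow_le_pow_left₀ (abs_nonneg _) (abs_krawtchouk_le u s) _
    calc krawtchouk u s ^ (2 * s * L) * n.choose t
        ≤ n.choose s ^ (2 * s * L) * (n : ℝ) ^ d :=
          mul_le_mul hK hchoose (by positivity) (by positivity)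
      _ ≤ n.choose s ^ (2 * s * L) * (n : ℝ) ^ (2 * s) := by
          gcongr
          omega

lemma sum_inv_choose_hammingNorm :
    ∑ u : Fin n → ZMod 2, ((n.choose (hammingNorm u) : ℝ))⁻¹ = n + 1 := by
  have hmaps : ∀ u ∈ (univ : Finset (Fin n → ZMod 2)), hammingNorm u ∈ range (n + 1) :=
    fun u _ => mem_range.2 (Nat.lt_succ_of_le (hammingNorm_le u))
  have hfiber : ∀ t ∈ range (n + 1),
      ∑ u ∈ sphereB n t, ((n.choose (hammingNorm u) : ℝ))⁻¹ = 1 := fun t ht => by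
    have hpos : (0 : ℝ) < n.choose t := by
      exact_mod_cast Nat.choose_pos (Nat.lt_succ_iff.1 (mem_range.1 ht))
    rw [sum_congr rfl fun u hu => by rw [(mem_filter.1 hu).2], sum_const, card_sphereB,
      nsmul_eq_mul, mul_inv_cancel₀ hpos.ne']
  rw [← sum_fiberwise_of_maps_to hmaps]
  refine (sum_congr rfl hfiber).trans ?_
  simp

lemma sum_krawtchouk_pow_le {s L : ℕ} (hn0 : 0 < n) (hn : n ≤ s ^ 2) (hL : log n ≤ L) :
    ∑ u : Fin n → ZMod 2, krawtchouk u s ^ (2 * s * L) ≤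
      n.choose s ^ (2 * s * L) * ((n : ℝ) ^ (2 * s) * (n + 1)) := by
  have hle (u : Fin n → ZMod 2) : krawtchouk u s ^ (2 * s * L) ≤
      n.choose s ^ (2 * s * L) * (n : ℝ) ^ (2 * s) * ((n.choose (hammingNorm u) : ℝ))⁻¹ := by
    have hpos : (0 : ℝ) < n.choose (hammingNorm u) := by
      exact_mod_cast Nat.choose_pos (hammingNorm_le u)
    rw [← div_eq_mul_inv, le_div_iff₀ hpos]
    exact krawtchouk_pow_mul_choose_le u hn0 hn hL
  calc ∑ u : Fin n → ZMod 2, krawtchouk u s ^ (2 * s * L)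
      ≤ ∑ u : Fin n → ZMod 2,
          n.choose s ^ (2 * s * L) * (n : ℝ) ^ (2 * s) * ((n.choose (hammingNorm u) : ℝ))⁻¹ :=
        sum_le_sum fun u _ => hle u
    _ = _ := by rw [← mul_sum, sum_inv_choose_hammingNorm, mul_assoc]

end KrawtchoukBounds

lemma card_filter_mul_pow_le_sum_pow {α : Type*} [Fintype α] (f : α → ℝ) {c : ℝ} (hc : 0 ≤ c)
    {N : ℕ} (hN : Even N) : #{x | c ≤ f x} * c ^ N ≤ ∑ x, f x ^ N :=
  calc (#{x | c ≤ f x} : ℝ) * c ^ N = ∑ x with c ≤ f x, c ^ N := by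
        rw [sum_const, nsmul_eq_mul]
    _ ≤ ∑ x with c ≤ f x, f x ^ N :=
        sum_le_sum fun x hx => pow_le_pow_left₀ hc (mem_filter.1 hx).2 N
    _ ≤ ∑ x, f x ^ N :=
        sum_le_sum_of_subset_of_nonneg (filter_subset _ _) fun x _ _ => hN.pow_nonneg _

noncomputable def largeSpectrum {ι : Type*} [Fintype ι] [DecidableEq ι] (η : ℝ) (X : Finset (ι → ZMod 2)) :
    Finset (ι → ZMod 2) :=
  {u | η * #X ≤ ∑ w ∈ X, signF2 (u ⬝ᵥ w)}

lemma card_largeSpectrum_le {n s L : ℕ} (hns : n = s ^ 2) (hn0 : 0 < n) (hL : log n ≤ L)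
    {η δ : ℝ} (hη : 0 < η) (hδ : 0 < δ) {X : Finset (Fin n → ZMod 2)} (hX : X ⊆ sphereB n s)
    (hXcard : δ * n.choose s ≤ #X) :
    (#(largeSpectrum η X) : ℝ) ≤ (η * δ)⁻¹ ^ (2 * s * L) * ((n : ℝ) ^ (2 * s) * (n + 1)) := by
  set M := 2 * s * L
  have hC : (0 : ℝ) < n.choose s := by exact_mod_cast Nat.choose_pos (by nlinarith : s ≤ n)
  have hmoment : #(largeSpectrum η X) * (η * #X : ℝ) ^ M ≤
      n.choose s ^ M * ((n : ℝ) ^ (2 * s) * (n + 1)) :=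
    calc _ ≤ ∑ u : Fin n → ZMod 2, (∑ w ∈ X, signF2 (u ⬝ᵥ w)) ^ M :=
          card_filter_mul_pow_le_sum_pow _ (by positivity) ⟨s * L, by ring⟩
      _ ≤ ∑ u : Fin n → ZMod 2, krawtchouk u s ^ M := sum_pow_sum_signF2_dotProduct_mono hX M
      _ ≤ _ := sum_krawtchouk_pow_le hn0 hns.le hL
  have hδC : (η * δ) ^ M * n.choose s ^ M ≤ (η * #X : ℝ) ^ M := by
    rw [← mul_pow, mul_assoc]; gcongr
  rw [inv_pow, ← div_eq_inv_mul, le_div_iff₀ (by positivity)]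
  refine le_of_mul_le_mul_right ?_ (pow_pos hC M)
  calc _ ≤ (#(largeSpectrum η X) : ℝ) * (η * #X : ℝ) ^ M := by rw [mul_assoc]; gcongr
    _ ≤ _ := hmoment
    _ = _ := by ring

lemma eventually_mul_log_le_rpow (c : ℝ) :
    ∀ᶠ n : ℕ in atTop, c * log n ≤ (n : ℝ) ^ ((1 : ℝ) / 6) := by
  have hc : 0 < |c| + 1 := by positivity
  have h := (isLittleO_log_rpow_atTop (by norm_num : (0 : ℝ) < 1 / 6)).bound (inv_pos.2 hc)
  filter_upwards [tendsto_natCast_atTop_atTop.eventually h] with n hn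
  rw [norm_eq_abs, norm_of_nonneg (by positivity), ← div_eq_inv_mul, le_div_iff₀ hc] at hn
  calc c * log n ≤ |log n| * |c| := by rw [mul_comm, ← abs_mul]; exact le_abs_self _
    _ ≤ |log n| * (|c| + 1) := by gcongr; linarith
    _ ≤ _ := hn

lemma pow_mul_le_exp_of_mul_log_le {K : ℝ} (hK : 0 < K) {n s : ℕ} (hns : n = s ^ 2)
    (hn : 3 ≤ n) (hlog : (4 * |log K| + 4) * log n ≤ (n : ℝ) ^ ((1 : ℝ) / 6)) :
    K ^ (2 * s * ⌈log n⌉₊) * ((n : ℝ) ^ (2 * s) * (n + 1)) ≤ exp ((n : ℝ) ^ ((2 : ℝ) / 3)) := by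
  have hn3 : (3 : ℝ) ≤ n := by exact_mod_cast hn
  have hnR : (0 : ℝ) < n := by positivity
  have hlog1 : 1 ≤ log n := by
    rw [le_log_iff_exp_le hnR]
    linarith [exp_one_lt_d9]
  have hs : (1 : ℝ) ≤ s := by exact_mod_cast (by nlinarith : 1 ≤ s)
  have hL : (⌈log n⌉₊ : ℝ) ≤ 2 * log n := by
    linarith [Nat.ceil_lt_add_one (by linarith : 0 ≤ log n)]
  have hsqrt : (n : ℝ) ^ ((1 : ℝ) / 2) = s := by
    rw [← sqrt_eq_rpow, hns, Nat.cast_pow, sqrt_sq (Nat.cast_nonneg _)]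
  have hK' : K ^ (2 * s * ⌈log n⌉₊) ≤ exp (4 * s * log n * |log K|) := by
    rw [← exp_log hK, ← exp_nat_mul, exp_log hK, exp_le_exp]
    push_cast
    calc 2 * s * ⌈log n⌉₊ * log K ≤ 2 * s * ⌈log n⌉₊ * |log K| := by
          gcongr; exact le_abs_self _
      _ ≤ 2 * s * (2 * log n) * |log K| := by gcongr
      _ = 4 * s * log n * |log K| := by ring
  have hpow : (n : ℝ) ^ (2 * s) = exp (2 * s * log n) := by
    rw [← exp_log (pow_pos hnR _), log_pow]; push_cast; rfl
  have hsucc : (n : ℝ) + 1 ≤ exp (2 * s * log n) := by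
    calc (n : ℝ) + 1 ≤ (n : ℝ) ^ 2 := by nlinarith
      _ = exp (2 * log n) := by rw [← exp_log (pow_pos hnR _), log_pow]; push_cast; rfl
      _ ≤ exp (2 * s * log n) := by gcongr; nlinarith
  calc K ^ (2 * s * ⌈log n⌉₊) * ((n : ℝ) ^ (2 * s) * (n + 1))
      ≤ exp (4 * s * log n * |log K|) * (exp (2 * s * log n) * exp (2 * s * log n)) := by
        rw [hpow]; gcongr
    _ = exp (s * ((4 * |log K| + 4) * log n)) := by rw [← exp_add, ← exp_add]; ring_nf
    _ ≤ exp (s * (n : ℝ) ^ ((1 : ℝ) / 6)) := by gcongr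
    _ = exp ((n : ℝ) ^ ((2 : ℝ) / 3)) := by rw [← hsqrt, ← rpow_add hnR]; norm_num

theorem stmt16 (δ : ℝ) (hδ : 0 < δ) :
    ∃ N : ℕ, ∀ n s : ℕ, n = s ^ 2 → N ≤ n →
      ∀ B' : Finset (Fin n → ZMod 2), B' ⊆ sphereB n s →
        δ * (sphereB n s).card ≤ (B'.card : ℝ) →
        (Set.ncard {u : Fin n → ZMod 2 |
            (0.98 : ℝ) * B'.card ≤ ∑ w ∈ B', chi n u w} : ℝ) ≤
          Real.exp ((n : ℝ) ^ ((2 : ℝ) / 3)) := by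
  set K : ℝ := (0.98 * δ)⁻¹
  obtain ⟨N, hN⟩ := eventually_atTop.1
    ((eventually_mul_log_le_rpow (4 * |log K| + 4)).and (eventually_ge_atTop 3))
  refine ⟨N, fun n s hns hNn B' hB' hcard => ?_⟩
  obtain ⟨hlog, hn3⟩ := hN n hNn
  have hspec : {u : Fin n → ZMod 2 | (0.98 : ℝ) * B'.card ≤ ∑ w ∈ B', chi n u w} =
      largeSpectrum 0.98 B' := by
    ext u; simp [largeSpectrum, chi_eq_signF2]
  rw [hspec, Set.ncard_coe_finset]
  rw [card_sphereB] at hcard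
  exact (card_largeSpectrum_le hns (by omega) (Nat.le_ceil _) (by norm_num) hδ hB' hcard).trans
    (pow_mul_le_exp_of_mul_log_le (by positivity) hns hn3 hlog)
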